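/- arXiv:2010.03580 — 2 statements merged into one kernel-verified Lean document; each statement's English description precedes it below -/
import Mathlib

section
/- For every N ∈ ℕ, the process L̲^N := Γ_N^{(N)}[0] (the N-th iterate of Γ_N applied to the zero process) is the minimal solution to the N-particle system, and moreover the error bound ‖Γ_N^{(k)}[0] − L̲^N‖_∞ ≤ (N−k)^+/N holds almost surely for every k ∈ ℕ, where ‖·‖_∞ is the uniform norm on [0,∞). -/
open MeasureTheory ProbabilityTheory Filter Set
open scoped ENNReal NNReal Topology Classical

noncomputable section

/-! ### The space `M` of distribution functions on `[0,∞]` -/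

/-- Membership in the space `M` of cumulative distribution functions of probability
measures on `[0,∞]`, encoded as functions on `ℝ` extended by `0` on negative times
(the value at the point `∞` is by definition `1` and is not encoded). -/
def InM (ℓ : ℝ → ℝ) : Prop :=
  Monotone ℓ ∧ (∀ t : ℝ, ContinuousWithinAt ℓ (Ici t) t) ∧
    (∀ t : ℝ, t < 0 → ℓ t = 0) ∧ (∀ t : ℝ, ℓ t ≤ 1)

def MSet : Set (ℝ → ℝ) := {ℓ | InM ℓ}

/-- Convergence in `M`, i.e. weak convergence of the corresponding probability measures
on `[0,∞]`: pointwise convergence at every continuity point (there is nothing to check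
at the point `∞`, where all elements of `M` take the value `1`). -/
def MConv (ℓn : ℕ → ℝ → ℝ) (ℓ : ℝ → ℝ) : Prop :=
  ∀ t : ℝ, ContinuousAt ℓ t → Tendsto (fun n => ℓn n t) atTop (nhds (ℓ t))

/-- The Lévy metric on `M`. -/
def levyDist (f g : ℝ → ℝ) : ℝ :=
  sInf {ε : ℝ | 0 < ε ∧ ∀ t : ℝ, 0 ≤ t → g t ≤ f (t + ε) + ε ∧ f (t - ε) - ε ≤ g t}

/-! ### Brownian motion -/

/-- `B` is a standard Brownian motion (on `[0,∞)`) under `P`. -/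
def IsBrownianMotion {Ω : Type*} [MeasurableSpace Ω] (P : Measure Ω) (B : ℝ → Ω → ℝ) : Prop :=
  (∀ t : ℝ, Measurable (B t)) ∧
  (∀ᵐ ω ∂P, B 0 ω = 0 ∧ Continuous fun t => B t ω) ∧
  (∀ s t : ℝ, 0 ≤ s → s ≤ t →
    Measure.map (fun ω => B t ω - B s ω) P = gaussianReal 0 (Real.toNNReal (t - s))) ∧
  (∀ (n : ℕ) (ts : ℕ → ℝ), Monotone ts → 0 ≤ ts 0 →
    iIndepFun
      (fun i : Fin n => fun ω => B (ts (i.1 + 1)) ω - B (ts i.1) ω) P)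

/-! ### The McKean--Vlasov problem -/

/-- The event that the process `X_s = X0 + B_s - α Λ_s` hits `(-∞,0]` by time `t`.
By right-continuity this is the event `{τ ≤ t}` for `τ = inf{s ≥ 0 : X_s ≤ 0}`. -/
def mvHitBy {Ω : Type*} (α : ℝ) (X0 : Ω → ℝ) (B : ℝ → Ω → ℝ) (Λ : ℝ → ℝ) (t : ℝ) : Set Ω :=
  {ω | ∃ s, 0 ≤ s ∧ s ≤ t ∧ X0 ω + B s ω - α * Λ s ≤ 0}

/-- `Λ` solves the McKean--Vlasov problem `Λ_t = P(τ ≤ t)`,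
`τ = inf{t ≥ 0 : X0 + B_t - αΛ_t ≤ 0}` (with `Λ` extended by `0` on negative times). -/
def IsMVSolution {Ω : Type*} [MeasurableSpace Ω] (P : Measure Ω) (α : ℝ)
    (X0 : Ω → ℝ) (B : ℝ → Ω → ℝ) (Λ : ℝ → ℝ) : Prop :=
  InM Λ ∧ ∀ t : ℝ, 0 ≤ t → Λ t = (P (mvHitBy α X0 B Λ t)).toReal

/-- Minimal solution of the McKean--Vlasov problem. -/
def IsMinimalMVSolution {Ω : Type*} [MeasurableSpace Ω] (P : Measure Ω) (α : ℝ)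
    (X0 : Ω → ℝ) (B : ℝ → Ω → ℝ) (Λ : ℝ → ℝ) : Prop :=
  IsMVSolution P α X0 B Λ ∧ ∀ Λ' : ℝ → ℝ, IsMVSolution P α X0 B Λ' → ∀ t, Λ t ≤ Λ' t

/-- The fixed-point operator `Γ` of the McKean--Vlasov problem:
`Γ[ℓ]_t = P(τ^ℓ ≤ t)` where `τ^ℓ = inf{t ≥ 0 : X0 + B_t - αℓ_t ≤ 0}`. -/
def Gamma {Ω : Type*} [MeasurableSpace Ω] (P : Measure Ω) (α : ℝ)
    (X0 : Ω → ℝ) (B : ℝ → Ω → ℝ) (ℓ : ℝ → ℝ) : ℝ → ℝ :=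
  fun t => if 0 ≤ t then (P (mvHitBy α X0 B ℓ t)).toReal else 0

/-- The solution process of the McKean--Vlasov problem, as a path in `D([-1,∞))`,
extended by its initial value on negative times. -/
def mvPath {Ω : Type*} (α : ℝ) (X0 : Ω → ℝ) (B : ℝ → Ω → ℝ) (Λ : ℝ → ℝ) (ω : Ω) : ℝ → ℝ :=
  fun t => if t < 0 then X0 ω + B 0 ω else X0 ω + B t ω - α * Λ t

/-- The event `{τ ≥ t}` that the solution process survives up to time `t`. -/
def mvSurvive {Ω : Type*} (α : ℝ) (X0 : Ω → ℝ) (B : ℝ → Ω → ℝ) (Λ : ℝ → ℝ) (t : ℝ) : Set Ω :=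
  {ω | ∀ s, 0 ≤ s → s < t → 0 < X0 ω + B s ω - α * Λ s}

/-- A physical solution of the McKean--Vlasov problem: a solution whose jump sizes satisfy
`ΔΛ_t = inf{x > 0 : P(τ ≥ t, X_{t-} ∈ [0, αx]) < x}` for all `t ≥ 0`. -/
def IsPhysicalMVSolution {Ω : Type*} [MeasurableSpace Ω] (P : Measure Ω) (α : ℝ)
    (X0 : Ω → ℝ) (B : ℝ → Ω → ℝ) (Λ : ℝ → ℝ) : Prop :=
  IsMVSolution P α X0 B Λ ∧ ∀ t : ℝ, 0 ≤ t →
    Λ t - Function.leftLim Λ t =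
      sInf {x : ℝ | 0 < x ∧
        (P {ω | ω ∈ mvSurvive α X0 B Λ t ∧
          Function.leftLim (mvPath α X0 B Λ ω) t ∈ Icc 0 (α * x)}).toReal < x}

/-! ### The particle system -/

/-- The fixed-point operator `Γ_N` of the `N`-particle system, applied to a càdlàg
process `L`. -/
def GammaN {Ω : Type*} (α : ℝ) (N : ℕ) (X0 : Fin N → Ω → ℝ) (B : Fin N → ℝ → Ω → ℝ)
    (L : ℝ → Ω → ℝ) : ℝ → Ω → ℝ :=
  fun t ω => if 0 ≤ t then
    (N : ℝ)⁻¹ * ∑ i : Fin N,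
      (if ∃ s, 0 ≤ s ∧ s ≤ t ∧ X0 i ω + B i s ω - α * L s ω ≤ 0 then (1 : ℝ) else 0)
  else 0

/-- A solution of the `N`-particle system: a `[0,1]`-valued non-decreasing càdlàg process
`L` (extended by `0` on negative times) such that, almost surely, `L` is a fixed point
of `Γ_N`. -/
def IsParticleSolution {Ω : Type*} [MeasurableSpace Ω] (P : Measure Ω) (α : ℝ) (N : ℕ)
    (X0 : Fin N → Ω → ℝ) (B : Fin N → ℝ → Ω → ℝ) (L : ℝ → Ω → ℝ) : Prop :=
  ∀ᵐ ω ∂P, InM (fun t => L t ω) ∧ ∀ t : ℝ, L t ω = GammaN α N X0 B L t ω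

/-- Minimal solution of the `N`-particle system. -/
def IsMinimalParticleSolution {Ω : Type*} [MeasurableSpace Ω] (P : Measure Ω) (α : ℝ) (N : ℕ)
    (X0 : Fin N → Ω → ℝ) (B : Fin N → ℝ → Ω → ℝ) (L : ℝ → Ω → ℝ) : Prop :=
  IsParticleSolution P α N X0 B L ∧
    ∀ L' : ℝ → Ω → ℝ, IsParticleSolution P α N X0 B L' → ∀ᵐ ω ∂P, ∀ t, L t ω ≤ L' t ω

/-- The path of particle `i`, extended by its initial value on negative times. -/
def psPath {Ω : Type*} (α : ℝ) (N : ℕ) (X0 : Fin N → Ω → ℝ) (B : Fin N → ℝ → Ω → ℝ)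
    (L : ℝ → Ω → ℝ) (i : Fin N) (ω : Ω) : ℝ → ℝ :=
  fun t => if t < 0 then X0 i ω + B i 0 ω else X0 i ω + B i t ω - α * L t ω

/-- A physical solution of the `N`-particle system: for all `t ≥ 0`,
`ΔL_t = inf{k/N ≥ 0 : k ∈ ℕ, ν^N_{t-}([0, αk/N]) ≤ k/N}`, where `N ν^N_{t-}(A)` counts the
particles that survive up to time `t` whose left limit at `t` lies in `A`. -/
def IsPhysicalParticleSolution {Ω : Type*} [MeasurableSpace Ω] (P : Measure Ω) (α : ℝ) (N : ℕ)
    (X0 : Fin N → Ω → ℝ) (B : Fin N → ℝ → Ω → ℝ) (L : ℝ → Ω → ℝ) : Prop :=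
  IsParticleSolution P α N X0 B L ∧
  ∀ᵐ ω ∂P, ∀ t : ℝ, 0 ≤ t →
    L t ω - Function.leftLim (fun s => L s ω) t =
      sInf {r : ℝ | ∃ k : ℕ, r = (k : ℝ) / N ∧
        (N : ℝ)⁻¹ * (∑ i : Fin N,
          (if ((∀ s, 0 ≤ s → s < t → 0 < X0 i ω + B i s ω - α * L s ω) ∧
              Function.leftLim (psPath α N X0 B L i ω) t ∈ Icc (0 : ℝ) (α * (k : ℝ) / N))
            then (1 : ℝ) else 0)) ≤ (k : ℝ) / N}

/-! ### Skorokhod's M1 topology -/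

/-- The completed graph of the path `x`, viewed as a path on `[a,b]`. -/
def m1Graph (a b : ℝ) (x : ℝ → ℝ) : Set (ℝ × ℝ) :=
  {p | p.1 ∈ Icc a b ∧ min (Function.leftLim x p.1) (x p.1) ≤ p.2 ∧
    p.2 ≤ max (Function.leftLim x p.1) (x p.1)}

/-- The traversal order on the completed graph of `x`. -/
def m1GraphLE (x : ℝ → ℝ) (p q : ℝ × ℝ) : Prop :=
  p.1 < q.1 ∨ (p.1 = q.1 ∧ |Function.leftLim x p.1 - p.2| ≤ |Function.leftLim x q.1 - q.2|)

/-- `(r,u)` is a parametric representation of the completed graph of `x` on `[a,b]`: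
a continuous, monotone (for the traversal order) surjection from `[0,1]` onto the graph. -/
def IsParamRep (a b : ℝ) (x : ℝ → ℝ) (r u : ℝ → ℝ) : Prop :=
  ContinuousOn r (Icc 0 1) ∧ ContinuousOn u (Icc 0 1) ∧
  (∀ s ∈ Icc (0 : ℝ) 1, (r s, u s) ∈ m1Graph a b x) ∧
  (∀ p ∈ m1Graph a b x, ∃ s ∈ Icc (0 : ℝ) 1, (r s, u s) = p) ∧
  (∀ s₁ ∈ Icc (0 : ℝ) 1, ∀ s₂ ∈ Icc (0 : ℝ) 1, s₁ ≤ s₂ →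
    m1GraphLE x (r s₁, u s₁) (r s₂, u s₂))

/-- Skorokhod's M1 metric on `D([a,b])`. -/
def m1DistOn (a b : ℝ) (x y : ℝ → ℝ) : ℝ :=
  sInf {m : ℝ | ∃ r₁ u₁ r₂ u₂ : ℝ → ℝ, IsParamRep a b x r₁ u₁ ∧ IsParamRep a b y r₂ u₂ ∧
    m = sSup ((fun s => max |r₁ s - r₂ s| |u₁ s - u₂ s|) '' Icc (0 : ℝ) 1)}

/-- Convergence in `D([a,∞))` with the M1 topology: M1 convergence on `[a,T]` for every
continuity point `T` of the limit. -/
def M1ConvOn (a : ℝ) (xn : ℕ → ℝ → ℝ) (x : ℝ → ℝ) : Prop :=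
  ∀ T : ℝ, a < T → ContinuousAt x T →
    Tendsto (fun n => m1DistOn a T (xn n) x) atTop (nhds 0)

/-- Càdlàg paths on `[a,∞)`, encoded as functions on `ℝ` which are constant on `(-∞,a]`. -/
def DSet (a : ℝ) : Set (ℝ → ℝ) :=
  {x | (∀ t : ℝ, ContinuousWithinAt x (Ici t) t) ∧
    (∀ t : ℝ, ∃ l : ℝ, Tendsto x (nhdsWithin t (Iio t)) (nhds l)) ∧
    ∀ t : ℝ, t ≤ a → x t = x a}

/-! ### The space `Ē = C([0,∞)) × M` -/

/-- Continuous paths on `[0,∞)`, encoded as functions on `ℝ` which are constant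
on `(-∞,0]` (this encodes the extension `ŵ`). -/
def CHat : Set (ℝ → ℝ) := {w | Continuous w ∧ ∀ t : ℝ, t ≤ 0 → w t = w 0}

/-- Convergence in `Ē = C([0,∞)) × M`: compact convergence in the first coordinate and
Lévy-metric (weak) convergence in the second. -/
def EBarConv (wn : ℕ → ℝ → ℝ) (ln : ℕ → ℝ → ℝ) (w ℓ : ℝ → ℝ) : Prop :=
  (∀ T : ℝ, 0 < T → TendstoUniformlyOn (fun n => wn n) w atTop (Icc 0 T)) ∧
  Tendsto (fun n => levyDist (ln n) ℓ) atTop (nhds 0)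

/-- The embedding `ι_α(w,ℓ) = ŵ - αℓ̌` (the extensions are already encoded in the
conventions for `CHat` and `M`). -/
def iotaAlpha (α : ℝ) (w ℓ : ℝ → ℝ) : ℝ → ℝ := fun t => w t - α * ℓ t

/-- The image `ι_α(Ē) ⊆ D([-1,∞))`. -/
def iotaImage (α : ℝ) : Set (ℝ → ℝ) :=
  {x | ∃ w ∈ CHat, ∃ ℓ ∈ MSet, x = iotaAlpha α w ℓ}

/-! ### Hitting-time functionals -/

/-- The path `x` hits `(-∞,0]` at some nonnegative time. -/
def hits (x : ℝ → ℝ) : Prop := ∃ s, 0 ≤ s ∧ x s ≤ 0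

/-- The first hitting time `τ₀(x) = inf{s ≥ 0 : x_s ≤ 0}`. -/
def tau0 (x : ℝ → ℝ) : ℝ := sInf {s : ℝ | 0 ≤ s ∧ x s ≤ 0}

/-- The loss functional `λ_t(x) = 1[τ₀(x) ≤ t]` (for right-continuous paths,
`τ₀(x) ≤ t` is equivalent to `∃ s ∈ [0,t], x_s ≤ 0`). -/
def lam (t : ℝ) (x : ℝ → ℝ) : ℝ := if ∃ s, 0 ≤ s ∧ s ≤ t ∧ x s ≤ 0 then 1 else 0

/-- The crossing property of a path: the path dips strictly below its level at the first
hitting time of `0`, immediately after that time. -/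
def SatisfiesCrossing (x : ℝ → ℝ) : Prop :=
  hits x → ∀ h : ℝ, 0 < h →
    sInf ((fun s => x (tau0 x + s) - x (tau0 x)) '' Icc 0 h) < 0

/-- The crossing property of a measure on path space. -/
def CrossingProp (μ : Measure (ℝ → ℝ)) : Prop :=
  ∀ h : ℝ, 0 < h →
    μ {x | hits x ∧ sInf ((fun s => x (tau0 x + s) - x (tau0 x)) '' Icc 0 h) = 0} = 0

/-- The loss function `t ↦ ⟨μ, λ_t⟩` of a measure on path space. -/
def lossOf (μ : Measure (ℝ → ℝ)) : ℝ → ℝ :=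
  fun t => if 0 ≤ t then (μ {x | ∃ s, 0 ≤ s ∧ s ≤ t ∧ x s ≤ 0}).toReal else 0

/-! ### Weak convergence, compactness and tightness -/

/-- A bounded measurable function on path space which is sequentially continuous for the
M1 topology on `D([a,∞))`. -/
def BddM1ContFun (a : ℝ) (f : (ℝ → ℝ) → ℝ) : Prop :=
  Measurable f ∧ (∃ C : ℝ, ∀ x, |f x| ≤ C) ∧
  ∀ (xn : ℕ → ℝ → ℝ) (x : ℝ → ℝ), (∀ n, xn n ∈ DSet a) → x ∈ DSet a →
    M1ConvOn a xn x → Tendsto (fun n => f (xn n)) atTop (nhds (f x))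

/-- Weak convergence of measures on `D([a,∞))` (with the M1 topology). -/
def WeakConvM1 (a : ℝ) (μn : ℕ → Measure (ℝ → ℝ)) (μ : Measure (ℝ → ℝ)) : Prop :=
  ∀ f : (ℝ → ℝ) → ℝ, BddM1ContFun a f →
    Tendsto (fun n => ∫ x, f x ∂(μn n)) atTop (nhds (∫ x, f x ∂μ))

/-- A bounded measurable function on `Ē` which is sequentially continuous for the product
topology of `Ē`. -/
def BddEBarContFun (F : (ℝ → ℝ) × (ℝ → ℝ) → ℝ) : Prop :=
  Measurable F ∧ (∃ C : ℝ, ∀ p, |F p| ≤ C) ∧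
  ∀ (pn : ℕ → (ℝ → ℝ) × (ℝ → ℝ)) (p : (ℝ → ℝ) × (ℝ → ℝ)),
    (∀ n, pn n ∈ CHat ×ˢ MSet) → p ∈ CHat ×ˢ MSet →
    EBarConv (fun n => (pn n).1) (fun n => (pn n).2) p.1 p.2 →
    Tendsto (fun n => F (pn n)) atTop (nhds (F p))

/-- Weak convergence of measures on `Ē`. -/
def WeakConvEBar (ξn : ℕ → Measure ((ℝ → ℝ) × (ℝ → ℝ)))
    (ξ : Measure ((ℝ → ℝ) × (ℝ → ℝ))) : Prop :=
  ∀ F, BddEBarContFun F →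
    Tendsto (fun n => ∫ p, F p ∂(ξn n)) atTop (nhds (∫ p, F p ∂ξ))

/-- A (sequentially) compact subset of `D([a,∞))` with the M1 topology. -/
def SeqCompactM1 (a : ℝ) (K : Set (ℝ → ℝ)) : Prop :=
  K ⊆ DSet a ∧ ∀ xn : ℕ → ℝ → ℝ, (∀ n, xn n ∈ K) →
    ∃ y ∈ K, ∃ φ : ℕ → ℕ, StrictMono φ ∧ M1ConvOn a (fun n => xn (φ n)) y

/-- A (sequentially) compact subset of `Ē`. -/
def SeqCompactEBar (K : Set ((ℝ → ℝ) × (ℝ → ℝ))) : Prop :=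
  K ⊆ CHat ×ˢ MSet ∧ ∀ pn : ℕ → (ℝ → ℝ) × (ℝ → ℝ), (∀ n, pn n ∈ K) →
    ∃ q ∈ K, ∃ φ : ℕ → ℕ, StrictMono φ ∧
      EBarConv (fun n => (pn (φ n)).1) (fun n => (pn (φ n)).2) q.1 q.2

/-- A (sequentially) compact subset of `C([0,T])` with the uniform topology. -/
def SeqCompactUnifOn (T : ℝ) (K : Set (ℝ → ℝ)) : Prop :=
  (∀ w ∈ K, ContinuousOn w (Icc 0 T)) ∧ ∀ xn : ℕ → ℝ → ℝ, (∀ n, xn n ∈ K) →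
    ∃ y ∈ K, ∃ φ : ℕ → ℕ, StrictMono φ ∧
      TendstoUniformlyOn (fun n => xn (φ n)) y atTop (Icc 0 T)

/-- A (sequentially) compact set of probability measures on `D([a,∞))`, for the topology
of weak convergence. -/
def SeqCompactProbM1 (a : ℝ) (K : Set (Measure (ℝ → ℝ))) : Prop :=
  (∀ μ ∈ K, IsProbabilityMeasure μ) ∧
  ∀ μn : ℕ → Measure (ℝ → ℝ), (∀ n, μn n ∈ K) →
    ∃ ν ∈ K, ∃ φ : ℕ → ℕ, StrictMono φ ∧ WeakConvM1 a (fun n => μn (φ n)) ν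

/-- A (sequentially) compact set of probability measures on `Ē`, for the topology of weak
convergence. -/
def SeqCompactProbEBar (K : Set (Measure ((ℝ → ℝ) × (ℝ → ℝ)))) : Prop :=
  (∀ ξ ∈ K, IsProbabilityMeasure ξ) ∧
  ∀ ξn : ℕ → Measure ((ℝ → ℝ) × (ℝ → ℝ)), (∀ n, ξn n ∈ K) →
    ∃ ζ ∈ K, ∃ φ : ℕ → ℕ, StrictMono φ ∧ WeakConvEBar (fun n => ξn (φ n)) ζ

/-- A bounded function on `P(D([a,∞)))` which is sequentially continuous for weak
convergence. -/
def BddContProbM1Fun (a : ℝ) (F : Measure (ℝ → ℝ) → ℝ) : Prop :=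
  (∃ C : ℝ, ∀ μ, |F μ| ≤ C) ∧
  ∀ (μn : ℕ → Measure (ℝ → ℝ)) (μ : Measure (ℝ → ℝ)),
    (∀ n, IsProbabilityMeasure (μn n)) → IsProbabilityMeasure μ →
    WeakConvM1 a μn μ → Tendsto (fun n => F (μn n)) atTop (nhds (F μ))

/-- A bounded function on `P(Ē)` which is sequentially continuous for weak convergence. -/
def BddContProbEBarFun (F : Measure ((ℝ → ℝ) × (ℝ → ℝ)) → ℝ) : Prop :=
  (∃ C : ℝ, ∀ ξ, |F ξ| ≤ C) ∧
  ∀ (ξn : ℕ → Measure ((ℝ → ℝ) × (ℝ → ℝ))) (ξ : Measure ((ℝ → ℝ) × (ℝ → ℝ))),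
    (∀ n, IsProbabilityMeasure (ξn n)) → IsProbabilityMeasure ξ →
    WeakConvEBar ξn ξ → Tendsto (fun n => F (ξn n)) atTop (nhds (F ξ))

/-- `N`-exchangeability of a random vector. -/
def NExchangeable {Ω : Type*} [MeasurableSpace Ω] (P : Measure Ω) (N : ℕ)
    (X : Fin N → Ω → ℝ) : Prop :=
  ∀ σ : Equiv.Perm (Fin N),
    Measure.map (fun ω => fun i => X (σ i) ω) P = Measure.map (fun ω => fun i => X i ω) P

/-- The empirical measure of `N` random paths. -/
def empPathMeas {Ω : Type*} [MeasurableSpace Ω] (N : ℕ) (paths : Fin N → Ω → ℝ → ℝ)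
    (ω : Ω) : Measure (ℝ → ℝ) :=
  (N : ℝ≥0∞)⁻¹ • ∑ i : Fin N, Measure.dirac (paths i ω)

/-- The empirical measure of `N` random elements of `Ē`. -/
def empPairMeas {Ω : Type*} [MeasurableSpace Ω] (N : ℕ)
    (pairs : Fin N → Ω → (ℝ → ℝ) × (ℝ → ℝ)) (ω : Ω) : Measure ((ℝ → ℝ) × (ℝ → ℝ)) :=
  (N : ℝ≥0∞)⁻¹ • ∑ i : Fin N, Measure.dirac (pairs i ω)

/-- The canonical filtration generated by the coordinate pair process `(W_s, L_s)_{s ≤ t}`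
on `Ē`. -/
def pairFiltration (t : ℝ) : MeasurableSpace ((ℝ → ℝ) × (ℝ → ℝ)) :=
  ⨆ s ∈ Iic t, MeasurableSpace.comap
    (fun p : (ℝ → ℝ) × (ℝ → ℝ) => (p.1 s, p.2 s)) inferInstance

/-- Under the measure `ν` on `Ē`, the canonical process `W - W_0` is a Brownian motion
with respect to the filtration generated by `(W, L)`; in particular it is independent
of `W_0`. -/
def CanonicalBMPair (ν : Measure ((ℝ → ℝ) × (ℝ → ℝ))) : Prop :=
  (∀ᵐ p ∂ν, Continuous fun t : ℝ => p.1 t - p.1 0) ∧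
  (∀ t : ℝ, 0 ≤ t →
    Measurable[pairFiltration t] fun p : (ℝ → ℝ) × (ℝ → ℝ) => p.1 t - p.1 0) ∧
  (∀ s t : ℝ, 0 ≤ s → s ≤ t →
    Measure.map (fun p : (ℝ → ℝ) × (ℝ → ℝ) => p.1 t - p.1 s) ν
        = gaussianReal 0 (Real.toNNReal (t - s)) ∧
      Indep (MeasurableSpace.comap (fun p : (ℝ → ℝ) × (ℝ → ℝ) => p.1 t - p.1 s)
        inferInstance) (pairFiltration s) ν) ∧
  IndepFun (fun p : (ℝ → ℝ) × (ℝ → ℝ) => p.1 0)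
    (fun p : (ℝ → ℝ) × (ℝ → ℝ) => fun t : ℝ => p.1 t - p.1 0) ν

/-! Everything happens path by path. `Γ_N` is monotone and causal, and its values lie on the
grid `ℕ / N`, so the iterates `ℓ k = Γ_N^{(k)}[0]` increase with `k`, and whenever
`ℓ k t < ℓ (k+1) t` the `k`-th iterate has already absorbed `k` particles by time `t`. Hence
`ℓ N` is a fixed point, `ℓ N - ℓ k ≤ 1 - k/N`, and by monotonicity `ℓ N` lies below every
solution. Continuity of the Brownian paths makes `Γ_N` preserve right-continuity, so `ℓ N` is
càdlàg. -/

lemma InM.nonneg {ℓ : ℝ → ℝ} (h : InM ℓ) (t : ℝ) : 0 ≤ ℓ t :=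
  (h.2.2.1 (min t (-1)) (by linarith [min_le_right t (-1)])).symm.le.trans
    (h.1 (min_le_left t (-1)))

namespace ParticleSystem

variable {Ω : Type*} {α : ℝ} {N : ℕ} {X0 : Fin N → Ω → ℝ} {B : Fin N → ℝ → Ω → ℝ}

/-- The particles `i` with `τ_{i,N}[L] ≤ t` on the path `ω`. -/
def hits (α : ℝ) (X0 : Fin N → Ω → ℝ) (B : Fin N → ℝ → Ω → ℝ) (L : ℝ → Ω → ℝ)
    (t : ℝ) (ω : Ω) : Finset (Fin N) :=
  {i | ∃ s, 0 ≤ s ∧ s ≤ t ∧ X0 i ω + B i s ω - α * L s ω ≤ 0}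

lemma hits_eq_empty_of_neg {L : ℝ → Ω → ℝ} {t : ℝ} (ht : t < 0) (ω : Ω) :
    hits α X0 B L t ω = ∅ :=
  Finset.filter_false_of_mem fun _ _ ⟨_, hs0, hst, _⟩ => by linarith

lemma gammaN_eq_card (L : ℝ → Ω → ℝ) (t : ℝ) (ω : Ω) :
    GammaN α N X0 B L t ω = (hits α X0 B L t ω).card / N := by
  unfold GammaN
  split_ifs with ht
  · rw [Finset.sum_boole, div_eq_inv_mul]
    rfl
  · simp [hits_eq_empty_of_neg (not_le.mp ht)]

lemma gammaN_le_gammaN_of_hits_subset {L L' : ℝ → Ω → ℝ} {t t' : ℝ} {ω : Ω}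
    (h : hits α X0 B L t ω ⊆ hits α X0 B L' t' ω) :
    GammaN α N X0 B L t ω ≤ GammaN α N X0 B L' t' ω := by
  rw [gammaN_eq_card, gammaN_eq_card]
  gcongr

lemma gammaN_nonneg (L : ℝ → Ω → ℝ) (t : ℝ) (ω : Ω) : 0 ≤ GammaN α N X0 B L t ω := by
  rw [gammaN_eq_card]
  positivity

lemma gammaN_le_one (L : ℝ → Ω → ℝ) (t : ℝ) (ω : Ω) : GammaN α N X0 B L t ω ≤ 1 := by
  rw [gammaN_eq_card]
  refine div_le_one_of_le₀ ?_ N.cast_nonneg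
  exact_mod_cast (Finset.card_le_univ _).trans_eq (Fintype.card_fin N)

lemma gammaN_of_neg (L : ℝ → Ω → ℝ) {t : ℝ} (ht : t < 0) (ω : Ω) :
    GammaN α N X0 B L t ω = 0 := by
  simp [gammaN_eq_card, hits_eq_empty_of_neg ht]

lemma gammaN_mono_time (L : ℝ → Ω → ℝ) (ω : Ω) :
    Monotone fun t => GammaN α N X0 B L t ω :=
  fun _ _ htt' => gammaN_le_gammaN_of_hits_subset fun i => by
    simp only [hits, Finset.mem_filter, Finset.mem_univ, true_and]
    exact fun ⟨s, hs0, hst, hx⟩ => ⟨s, hs0, hst.trans htt', hx⟩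

lemma gammaN_mono (hα : 0 ≤ α) {L L' : ℝ → Ω → ℝ} {ω : Ω} (hLL' : ∀ s, L s ω ≤ L' s ω)
    (t : ℝ) : GammaN α N X0 B L t ω ≤ GammaN α N X0 B L' t ω :=
  gammaN_le_gammaN_of_hits_subset fun i => by
    simp only [hits, Finset.mem_filter, Finset.mem_univ, true_and]
    exact fun ⟨s, hs0, hst, hx⟩ =>
      ⟨s, hs0, hst, by linarith [mul_le_mul_of_nonneg_left (hLL' s) hα]⟩

lemma gammaN_congr {L L' : ℝ → Ω → ℝ} {t : ℝ} {ω : Ω}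
    (hLL' : ∀ s, 0 ≤ s → s ≤ t → L s ω = L' s ω) :
    GammaN α N X0 B L t ω = GammaN α N X0 B L' t ω := by
  rw [gammaN_eq_card, gammaN_eq_card, hits, hits]
  congr 3
  refine Finset.filter_congr fun i _ => exists_congr fun s => ?_
  constructor
  · rintro ⟨hs0, hst, hx⟩
    exact ⟨hs0, hst, hLL' s hs0 hst ▸ hx⟩
  · rintro ⟨hs0, hst, hx⟩
    exact ⟨hs0, hst, (hLL' s hs0 hst).symm ▸ hx⟩

/-- A right-continuous path that has stayed positive on `[0, t]` stays positive a little
longer, so the event "`f` hits `(-∞, 0]` by time `u`" is locally constant to the right. -/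
lemma eventually_hitBy_iff {f : ℝ → ℝ} {t : ℝ} (hf : ContinuousWithinAt f (Ici t) t) :
    ∀ᶠ u in 𝓝[≥] t,
      (∃ s, 0 ≤ s ∧ s ≤ u ∧ f s ≤ 0) ↔ (∃ s, 0 ≤ s ∧ s ≤ t ∧ f s ≤ 0) := by
  by_cases hhit : ∃ s, 0 ≤ s ∧ s ≤ t ∧ f s ≤ 0
  · filter_upwards [self_mem_nhdsWithin] with u (htu : t ≤ u)
    obtain ⟨s, hs0, hst, hfs⟩ := hhit
    exact iff_of_true ⟨s, hs0, hst.trans htu, hfs⟩ ⟨s, hs0, hst, hfs⟩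
  push Not at hhit
  suffices ∀ᶠ u in 𝓝[≥] t, ∀ s, 0 ≤ s → s ≤ u → 0 < f s by
    filter_upwards [this] with u hu
    exact iff_of_false (fun ⟨s, hs0, hsu, hfs⟩ => (hu s hs0 hsu).not_ge hfs)
      (fun ⟨s, hs0, hst, hfs⟩ => (hhit s hs0 hst).not_ge hfs)
  rcases lt_or_ge t 0 with ht | ht
  · filter_upwards [nhdsWithin_le_nhds (Iio_mem_nhds ht)] with u (hu : u < 0) s hs0 hsu
    linarith
  obtain ⟨δ, hδ, hpos⟩ := mem_nhdsGE_iff_exists_Ico_subset.mp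
    (hf.eventually (lt_mem_nhds (hhit t ht le_rfl)))
  filter_upwards [Ico_mem_nhdsGE hδ] with u hu s hs0 hsu
  rcases le_or_gt s t with hst | hts
  · exact hhit s hs0 hst
  · exact hpos ⟨hts.le, hsu.trans_lt hu.2⟩

lemma continuousWithinAt_gammaN {L : ℝ → Ω → ℝ} {ω : Ω}
    (hB : ∀ i, Continuous fun u => B i u ω)
    (hL : ∀ t, ContinuousWithinAt (fun u => L u ω) (Ici t) t) (t : ℝ) :
    ContinuousWithinAt (fun u => GammaN α N X0 B L u ω) (Ici t) t := by
  have hhits : ∀ᶠ u in 𝓝[≥] t, hits α X0 B L u ω = hits α X0 B L t ω := by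
    filter_upwards [Filter.eventually_all.mpr fun i => eventually_hitBy_iff
      ((continuousWithinAt_const.add (hB i).continuousWithinAt).sub
        (continuousWithinAt_const.mul (hL t)))] with u hu
    exact Finset.filter_congr fun i _ => hu i
  refine tendsto_const_nhds.congr' ?_
  filter_upwards [hhits] with u hu
  rw [gammaN_eq_card, gammaN_eq_card, hu]

lemma inM_gammaN {L : ℝ → Ω → ℝ} {ω : Ω} (hB : ∀ i, Continuous fun u => B i u ω)
    (hL : ∀ t, ContinuousWithinAt (fun u => L u ω) (Ici t) t) :
    InM fun t => GammaN α N X0 B L t ω :=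
  ⟨gammaN_mono_time L ω, continuousWithinAt_gammaN hB hL,
    fun _ ht => gammaN_of_neg L ht ω, fun t => gammaN_le_one L t ω⟩

lemma add_one_div_le_of_div_le_of_lt {k m m' N : ℕ} (hk : (k : ℝ) / N ≤ m / N)
    (hm : (m : ℝ) / N < m' / N) : ((k : ℝ) + 1) / N ≤ m' / N := by
  rcases N.eq_zero_or_pos with rfl | hN
  · simp at hm
  have hN' : (0 : ℝ) < N := Nat.cast_pos.mpr hN
  rw [div_le_div_iff_of_pos_right hN'] at hk ⊢
  rw [div_lt_div_iff_of_pos_right hN'] at hm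
  have hkm : k ≤ m := by exact_mod_cast hk
  have hmm' : m < m' := by exact_mod_cast hm
  exact_mod_cast hkm.trans_lt hmm'

variable (α N X0 B) in
def gammaNIter (k : ℕ) : ℝ → Ω → ℝ :=
  (GammaN α N X0 B)^[k] fun _ : ℝ => fun _ : Ω => (0 : ℝ)

local notation "ℓ" => gammaNIter α N X0 B

lemma gammaNIter_succ (k : ℕ) : ℓ (k + 1) = GammaN α N X0 B (ℓ k) :=
  Function.iterate_succ_apply' _ _ _

lemma gammaNIter_succ_apply (k : ℕ) (t : ℝ) (ω : Ω) :
    ℓ (k + 1) t ω = GammaN α N X0 B (ℓ k) t ω := by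
  rw [gammaNIter_succ]

lemma gammaNIter_le_one (k : ℕ) (t : ℝ) (ω : Ω) : ℓ k t ω ≤ 1 := by
  cases k with
  | zero => exact zero_le_one
  | succ k => rw [gammaNIter_succ]; exact gammaN_le_one _ t ω

lemma gammaNIter_eq_div_nat (k : ℕ) (t : ℝ) (ω : Ω) : ∃ m : ℕ, ℓ k t ω = m / N := by
  cases k with
  | zero => exact ⟨0, by simp [gammaNIter]⟩
  | succ k => rw [gammaNIter_succ]; exact ⟨_, gammaN_eq_card _ t ω⟩

lemma gammaNIter_mono_time (k : ℕ) (ω : Ω) : Monotone fun t => ℓ k t ω := by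
  cases k with
  | zero => exact monotone_const
  | succ k => rw [gammaNIter_succ]; exact gammaN_mono_time _ ω

lemma gammaNIter_le_succ (hα : 0 ≤ α) (k : ℕ) (t : ℝ) (ω : Ω) : ℓ k t ω ≤ ℓ (k + 1) t ω := by
  induction k generalizing t with
  | zero => rw [gammaNIter_succ_apply]; exact gammaN_nonneg _ t ω
  | succ k ih =>
    rw [gammaNIter_succ_apply (k + 1), gammaNIter_succ_apply k]
    exact gammaN_mono hα ih t

lemma monotone_gammaNIter (hα : 0 ≤ α) (t : ℝ) (ω : Ω) : Monotone fun k => ℓ k t ω :=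
  monotone_nat_of_le_succ fun k => gammaNIter_le_succ hα k t ω

/-- By causality, if `ℓ (k+1)` and `ℓ (k+2)` differ at `t` then `ℓ k` and `ℓ (k+1)` already
differ at some `s ≤ t`; as all values lie on the grid `ℕ / N`, each such step of the iteration
adds at least one particle. -/
lemma div_le_gammaNIter_of_lt_succ (hα : 0 ≤ α) {k : ℕ} {t : ℝ} {ω : Ω}
    (hlt : ℓ k t ω < ℓ (k + 1) t ω) : (k : ℝ) / N ≤ ℓ k t ω := by
  induction k generalizing t with
  | zero => simp [gammaNIter]
  | succ k ih =>
    obtain ⟨s, hs0, hst, hs⟩ : ∃ s, 0 ≤ s ∧ s ≤ t ∧ ℓ k s ω < ℓ (k + 1) s ω := by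
      by_contra! hsame
      rw [gammaNIter_succ_apply (k + 1), gammaNIter_succ_apply k, gammaN_congr fun s hs0 hst =>
        (gammaNIter_le_succ hα k s ω).antisymm (hsame s hs0 hst)] at hlt
      exact hlt.false
    obtain ⟨m, hm⟩ := gammaNIter_eq_div_nat k s ω
    obtain ⟨m', hm'⟩ := gammaNIter_eq_div_nat (k + 1) s ω
    calc ((k + 1 : ℕ) : ℝ) / N = ((k : ℝ) + 1) / N := by push_cast; rfl
      _ ≤ ℓ (k + 1) s ω := by
        have hk := ih hs
        rw [hm'] at hs ⊢
        rw [hm] at hs hk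
        exact add_one_div_le_of_div_le_of_lt hk hs
      _ ≤ ℓ (k + 1) t ω := gammaNIter_mono_time (k + 1) ω hst

lemma div_le_gammaNIter_of_lt (hα : 0 ≤ α) {k j : ℕ} (hkj : k ≤ j) {t : ℝ} {ω : Ω}
    (hlt : ℓ k t ω < ℓ j t ω) : (k : ℝ) / N ≤ ℓ k t ω := by
  induction j, hkj using Nat.le_induction with
  | base => exact absurd hlt (lt_irrefl _)
  | succ j hkj ih =>
    rcases (show ℓ k t ω ≤ ℓ j t ω from monotone_gammaNIter hα t ω hkj).lt_or_eq with hkj' | heq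
    · exact ih hkj'
    · rw [heq] at hlt ⊢
      exact (div_le_div_of_nonneg_right (Nat.cast_le.mpr hkj) N.cast_nonneg).trans
        (div_le_gammaNIter_of_lt_succ hα hlt)

lemma isFixedPt_gammaNIter (hα : 0 ≤ α) (hN : 0 < N) :
    Function.IsFixedPt (GammaN α N X0 B) (ℓ N) := by
  funext t ω
  rw [← gammaNIter_succ]
  refine le_antisymm (not_lt.mp fun hlt => ?_) (gammaNIter_le_succ hα N t ω)
  have := div_le_gammaNIter_of_lt_succ hα hlt
  rw [div_self (Nat.cast_ne_zero.mpr hN.ne')] at this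
  exact (this.trans_lt hlt).not_ge (gammaNIter_le_one _ t ω)

lemma gammaNIter_eq_of_le (hα : 0 ≤ α) (hN : 0 < N) {k : ℕ} (hNk : N ≤ k) : ℓ k = ℓ N := by
  obtain ⟨m, rfl⟩ := exists_add_of_le hNk
  rw [gammaNIter, add_comm, Function.iterate_add_apply]
  exact (isFixedPt_gammaNIter hα hN).iterate m

lemma abs_gammaNIter_sub_le (hα : 0 ≤ α) (hN : 0 < N) (k : ℕ) (t : ℝ) (ω : Ω) :
    |ℓ k t ω - ℓ N t ω| ≤ max ((N : ℝ) - k) 0 / N := by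
  rcases le_or_gt N k with hNk | hkN
  · rw [gammaNIter_eq_of_le hα hN hNk, sub_self, abs_zero]
    positivity
  have hkN' : (k : ℝ) ≤ N := Nat.cast_le.mpr hkN.le
  have hle : ℓ k t ω ≤ ℓ N t ω := monotone_gammaNIter hα t ω hkN.le
  rw [abs_sub_comm, abs_of_nonneg (sub_nonneg.mpr hle), max_eq_left (sub_nonneg.mpr hkN')]
  rcases hle.lt_or_eq with hlt | heq
  · rw [sub_div, div_self (Nat.cast_ne_zero.mpr hN.ne')]
    linarith [div_le_gammaNIter_of_lt hα hkN.le hlt, (gammaNIter_le_one N t ω : ℓ N t ω ≤ 1)]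
  · rw [heq, sub_self]
    exact div_nonneg (sub_nonneg.mpr hkN') N.cast_nonneg

lemma gammaNIter_le_of_fixed (hα : 0 ≤ α) {L : ℝ → Ω → ℝ} {ω : Ω} (hL0 : ∀ t, 0 ≤ L t ω)
    (hfix : ∀ t, L t ω = GammaN α N X0 B L t ω) (k : ℕ) (t : ℝ) : ℓ k t ω ≤ L t ω := by
  induction k generalizing t with
  | zero => exact hL0 t
  | succ k ih => rw [gammaNIter_succ, hfix]; exact gammaN_mono hα ih t

lemma inM_gammaNIter {ω : Ω} (hB : ∀ i, Continuous fun u => B i u ω) (k : ℕ) :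
    InM fun t => ℓ k t ω := by
  induction k with
  | zero => exact ⟨monotone_const, fun _ => continuousWithinAt_const, fun _ _ => rfl,
      fun _ => zero_le_one⟩
  | succ k ih => rw [gammaNIter_succ]; exact inM_gammaN hB ih.2.1

end ParticleSystem

open ParticleSystem in
theorem particle_minimal_iteration_general {Ω : Type} [MeasurableSpace Ω] (P : Measure Ω)
    (α : ℝ) (hα : 0 < α) (N : ℕ) (hN : 1 ≤ N)
    (X0 : Fin N → Ω → ℝ) (B : Fin N → ℝ → Ω → ℝ)
    (hBM : ∀ i, IsBrownianMotion P (B i)) :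
    IsMinimalParticleSolution P α N X0 B
      ((GammaN α N X0 B)^[N] (fun _ : ℝ => fun _ : Ω => (0 : ℝ))) ∧
    ∀ k : ℕ, ∀ᵐ ω ∂P, ∀ t : ℝ,
      |(GammaN α N X0 B)^[k] (fun _ : ℝ => fun _ : Ω => (0 : ℝ)) t ω -
          (GammaN α N X0 B)^[N] (fun _ : ℝ => fun _ : Ω => (0 : ℝ)) t ω| ≤
        max ((N : ℝ) - (k : ℝ)) 0 / (N : ℝ) := by
  have hB : ∀ᵐ ω ∂P, ∀ i, Continuous fun u => B i u ω :=
    ae_all_iff.mpr fun i => (hBM i).2.1.mono fun _ h => h.2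
  refine ⟨⟨?_, fun L hL => ?_⟩, fun k => .of_forall fun ω t =>
    abs_gammaNIter_sub_le hα.le hN k t ω⟩
  · filter_upwards [hB] with ω hω
    exact ⟨inM_gammaNIter hω N,
      fun t => (congr_fun₂ (isFixedPt_gammaNIter hα.le hN) t ω).symm⟩
  · filter_upwards [hL] with ω ⟨hLM, hfix⟩
    exact gammaNIter_le_of_fixed hα.le hLM.nonneg hfix N

/-- For every `N`, `L̲^N := Γ_N^(N)[0]` is the minimal solution to the
`N`-particle system, and `‖Γ_N^(k)[0] - L̲^N‖_∞ ≤ (N-k)⁺/N` almost surely for every `k`. -/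
theorem particle_minimal_iteration {Ω : Type} [MeasurableSpace Ω] (P : Measure Ω)
    [IsProbabilityMeasure P] (α : ℝ) (hα : 0 < α) (N : ℕ) (hN : 1 ≤ N)
    (X0 : Fin N → Ω → ℝ) (B : Fin N → ℝ → Ω → ℝ)
    (hmeas : ∀ i, Measurable (X0 i))
    (hsupp : ∀ᵐ ω ∂P, ∀ i, 0 ≤ X0 i ω)
    (hBM : ∀ i, IsBrownianMotion P (B i))
    (hiid : iIndepFun
      (fun i : Fin N => fun ω => (X0 i ω, fun t : ℝ => B i t ω)) P)
    (hident : ∀ i j, Measure.map (X0 i) P = Measure.map (X0 j) P)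
    (hXB : ∀ i, IndepFun (X0 i) (fun ω => fun t : ℝ => B i t ω) P) :
    IsMinimalParticleSolution P α N X0 B
      ((GammaN α N X0 B)^[N] (fun _ : ℝ => fun _ : Ω => (0 : ℝ))) ∧
    ∀ k : ℕ, ∀ᵐ ω ∂P, ∀ t : ℝ,
      |(GammaN α N X0 B)^[k] (fun _ : ℝ => fun _ : Ω => (0 : ℝ)) t ω -
          (GammaN α N X0 B)^[N] (fun _ : ℝ => fun _ : Ω => (0 : ℝ)) t ω| ≤
        max ((N : ℝ) - (k : ℝ)) 0 / (N : ℝ) :=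
  particle_minimal_iteration_general P α hα N hN X0 B hBM

end
end

section
/- For every N ∈ ℕ, the physical solution to the N-particle system is equal to the minimal solution to the N-particle system; in particular, the physical solution is pathwise unique. -/
open MeasureTheory ProbabilityTheory Filter Set
open scoped ENNReal NNReal Topology Classical

noncomputable section

/-!
Fix a path `ω` and write `f i = X0 i + B i` for the free paths. A solution `ℓ` is the
normalised number of particles whose killed path `f i - α ℓ` has reached `(-∞, 0]`. If some
solution `ℓ'` were strictly below the physical solution `ℓ` somewhere, both being
right-continuous with values in `N⁻¹ ℕ`, there would be a first time `T` with
`ℓ' T < ℓ T`. Before `T` the larger loss `ℓ'` has killed every particle that `ℓ` has killed, so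
the `k` particles that `ℓ'` adds to `ℓ`'s casualties by time `T` include every surviving particle
within `α k / N` of the boundary at `T-`. Hence `k / N` is admissible in the physical jump
condition, the physical jump at `T` is at most `k / N`, and `ℓ T ≤ ℓ' T`.
-/

theorem isLeast_sInf_pos {g : ℝ → ℝ} {c : ℝ} (hc : 0 < c) (hgap : ∀ t, 0 < g t → c ≤ g t)
    (hrc : ∀ t, ContinuousWithinAt g (Ici t) t) (hne : {t | 0 < g t}.Nonempty)
    (hbdd : BddBelow {t | 0 < g t}) :
    IsLeast {t | 0 < g t} (sInf {t | 0 < g t}) := by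
  refine ⟨?_, fun t ht => csInf_le hbdd ht⟩
  have hfreq := (isGLB_csInf hne hbdd).frequently_mem hne
  have hge : c ≤ g (sInf {t | 0 < g t}) :=
    isClosed_Ici.mem_of_frequently_of_tendsto (hfreq.mono fun t ht => hgap t ht) (hrc _)
  exact hc.trans_le hge

theorem le_sub_of_mul_natCast_lt {c : ℝ} (hc : 0 ≤ c) {a b : ℕ} (h : c * a < c * b) :
    c ≤ c * b - c * a := by
  have hab : a + 1 ≤ b := by exact_mod_cast lt_of_mul_lt_mul_left h hc
  have : c * (a + 1) ≤ c * b := mul_le_mul_of_nonneg_left (by exact_mod_cast hab) hc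
  linarith

namespace ParticleSystem

open Function

variable {N : ℕ} (α : ℝ) (f : Fin N → ℝ → ℝ)

def hitBy (ℓ : ℝ → ℝ) (t : ℝ) : Finset (Fin N) :=
  Finset.univ.filter fun i => ∃ s, 0 ≤ s ∧ s ≤ t ∧ f i s - α * ℓ s ≤ 0

def hitBefore (ℓ : ℝ → ℝ) (t : ℝ) : Finset (Fin N) :=
  Finset.univ.filter fun i => ∃ s, 0 ≤ s ∧ s < t ∧ f i s - α * ℓ s ≤ 0

def killedPath (g ℓ : ℝ → ℝ) : ℝ → ℝ :=
  fun u => if u < 0 then g 0 else g u - α * ℓ u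

def IsLossFixedPoint (ℓ : ℝ → ℝ) : Prop :=
  ∀ t, ℓ t = (N : ℝ)⁻¹ * (hitBy α f ℓ t).card

def physicalJump (ℓ : ℝ → ℝ) (t : ℝ) : ℝ :=
  sInf {r : ℝ | ∃ k : ℕ, r = (k : ℝ) / N ∧
    (N : ℝ)⁻¹ * (∑ i : Fin N,
      (if ((∀ s, 0 ≤ s → s < t → 0 < f i s - α * ℓ s) ∧
          leftLim (killedPath α (f i) ℓ) t ∈ Icc (0 : ℝ) (α * (k : ℝ) / N))
        then (1 : ℝ) else 0)) ≤ (k : ℝ) / N}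

variable {α f}

theorem hitBy_eq_empty_of_neg {ℓ : ℝ → ℝ} {t : ℝ} (ht : t < 0) : hitBy α f ℓ t = ∅ := by
  refine Finset.filter_false_of_mem fun i _ => ?_
  rintro ⟨s, hs0, hst, -⟩
  linarith

theorem hitBy_subset_hitBefore {ℓ : ℝ → ℝ} {s t : ℝ} (hst : s < t) :
    hitBy α f ℓ s ⊆ hitBefore α f ℓ t :=
  fun i hi => by
    obtain ⟨-, u, hu0, hus, hu⟩ := Finset.mem_filter.mp hi
    exact Finset.mem_filter.mpr ⟨Finset.mem_univ i, u, hu0, hus.trans_lt hst, hu⟩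

theorem hitBefore_subset_hitBy_of_le (hα : 0 ≤ α) {ℓ ℓ' : ℝ → ℝ} {t : ℝ}
    (hle : ∀ s < t, ℓ s ≤ ℓ' s) : hitBefore α f ℓ t ⊆ hitBy α f ℓ' t :=
  fun i hi => by
    obtain ⟨-, s, hs0, hst, hs⟩ := Finset.mem_filter.mp hi
    exact Finset.mem_filter.mpr ⟨Finset.mem_univ i, s, hs0, hst.le, by nlinarith [hle s hst]⟩

theorem eventually_hitBy_eq_hitBefore (ℓ : ℝ → ℝ) (t : ℝ) :
    ∀ᶠ s in 𝓝[<] t, hitBy α f ℓ s = hitBefore α f ℓ t := by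
  have hcaught : ∀ i, ∀ᶠ s in 𝓝[<] t, i ∈ hitBefore α f ℓ t → i ∈ hitBy α f ℓ s := by
    intro i
    by_cases hi : i ∈ hitBefore α f ℓ t
    · obtain ⟨u, hu0, hut, hu⟩ := (Finset.mem_filter.mp hi).2
      filter_upwards [Ioo_mem_nhdsLT hut] with s hs
      exact fun _ => Finset.mem_filter.mpr ⟨Finset.mem_univ i, u, hu0, hs.1.le, hu⟩
    · exact Eventually.of_forall fun _ h => absurd h hi
  filter_upwards [self_mem_nhdsWithin, eventually_all.mpr hcaught] with s hst hs
  exact (hitBy_subset_hitBefore hst).antisymm hs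

namespace IsLossFixedPoint

variable {ℓ : ℝ → ℝ} (hfix : IsLossFixedPoint α f ℓ)
include hfix

theorem eq_zero_of_neg {t : ℝ} (ht : t < 0) : ℓ t = 0 := by
  rw [hfix t, hitBy_eq_empty_of_neg ht, Finset.card_empty, Nat.cast_zero, mul_zero]

theorem tendsto_nhdsLT (t : ℝ) :
    Tendsto ℓ (𝓝[<] t) (𝓝 ((N : ℝ)⁻¹ * (hitBefore α f ℓ t).card)) :=
  tendsto_const_nhds.congr' <| (eventually_hitBy_eq_hitBefore ℓ t).mono fun s hs => by
    rw [hfix s, hs]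

theorem leftLim_eq (t : ℝ) : leftLim ℓ t = (N : ℝ)⁻¹ * (hitBefore α f ℓ t).card :=
  leftLim_eq_of_tendsto (hfix.tendsto_nhdsLT t)

end IsLossFixedPoint

theorem leftLim_killedPath {g ℓ : ℝ → ℝ} {t m : ℝ} (hg : Continuous g)
    (hneg : ∀ u < 0, ℓ u = 0) (hℓ : Tendsto ℓ (𝓝[<] t) (𝓝 m)) (ht : 0 ≤ t) :
    leftLim (killedPath α g ℓ) t = g t - α * m := by
  have hpath : killedPath α g ℓ = fun u => g (max u 0) - α * ℓ u := by
    ext u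
    by_cases hu : u < 0
    · simp [killedPath, hu, hneg u hu, max_eq_right hu.le]
    · simp [killedPath, hu, max_eq_left (not_lt.mp hu)]
  have hg' : Tendsto (fun u => g (max u 0)) (𝓝[<] t) (𝓝 (g t)) := by
    have h : Tendsto (fun u => g (max u 0)) (𝓝[<] t) (𝓝 (g (max t 0))) :=
      ((hg.comp (continuous_id.max continuous_const)).tendsto t).mono_left nhdsWithin_le_nhds
    rwa [max_eq_left ht] at h
  rw [hpath]
  exact leftLim_eq_of_tendsto (hg'.sub (hℓ.const_mul α))

theorem physicalJump_le {ℓ : ℝ → ℝ} {t : ℝ} {k : ℕ} (s : Finset (Fin N)) (hs : s.card ≤ k)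
    (hcount : ∀ i, (∀ u, 0 ≤ u → u < t → 0 < f i u - α * ℓ u) →
      leftLim (killedPath α (f i) ℓ) t ≤ α * k / N → i ∈ s) :
    physicalJump α f ℓ t ≤ k / N := by
  refine csInf_le ⟨0, ?_⟩ ⟨k, rfl, ?_⟩
  · rintro r ⟨j, rfl, -⟩
    positivity
  rw [Finset.sum_boole]
  refine (mul_le_mul_of_nonneg_left ?_ (by positivity : (0 : ℝ) ≤ (N : ℝ)⁻¹)).trans_eq
    (inv_mul_eq_div _ _)
  refine Nat.cast_le.mpr ((Finset.card_le_card fun i hi => ?_).trans hs)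
  obtain ⟨-, hsurv, -, hle⟩ := Finset.mem_filter.mp hi
  exact hcount i hsurv hle

variable {ℓ ℓ' : ℝ → ℝ} (hfix : IsLossFixedPoint α f ℓ) (hfix' : IsLossFixedPoint α f ℓ')
include hfix hfix'

theorem le_of_le_before (hα : 0 ≤ α) (hf : ∀ i, Continuous (f i)) {T : ℝ} (hT : 0 ≤ T)
    (hphys : ℓ T - leftLim ℓ T = physicalJump α f ℓ T) (hle : ∀ s < T, ℓ s ≤ ℓ' s) :
    ℓ T ≤ ℓ' T := by
  set before := hitBefore α f ℓ T
  set k := (hitBy α f ℓ' T \ before).card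
  have hsub : before ⊆ hitBy α f ℓ' T := hitBefore_subset_hitBy_of_le hα hle
  have hℓ' : ℓ' T = (N : ℝ)⁻¹ * before.card + k / N := by
    rw [hfix' T, ← Finset.card_sdiff_add_card_eq_card hsub]
    push_cast
    ring
  have hjump : physicalJump α f ℓ T ≤ k / N := by
    refine physicalJump_le _ le_rfl fun i hsurv hnear => ?_
    rw [leftLim_killedPath (hf i) (fun u => hfix.eq_zero_of_neg) (hfix.tendsto_nhdsLT T) hT]
      at hnear
    refine Finset.mem_sdiff.mpr ⟨Finset.mem_filter.mpr ⟨Finset.mem_univ i, T, hT, le_rfl, ?_⟩,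
      fun hi => ?_⟩
    · rw [hℓ', mul_add, mul_div_assoc']
      linarith
    · obtain ⟨s, hs0, hsT, hs⟩ := (Finset.mem_filter.mp hi).2
      exact (hsurv s hs0 hsT).not_ge hs
  rw [hℓ', ← hfix.leftLim_eq T]
  linarith

theorem le_of_physicalJump (hα : 0 ≤ α) (hf : ∀ i, Continuous (f i))
    (hrc : ∀ t, ContinuousWithinAt ℓ (Ici t) t) (hrc' : ∀ t, ContinuousWithinAt ℓ' (Ici t) t)
    (hphys : ∀ t, 0 ≤ t → ℓ t - leftLim ℓ t = physicalJump α f ℓ t) :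
    ℓ ≤ ℓ' := by
  by_contra hcon
  obtain ⟨t₀, ht₀⟩ : ∃ t, 0 < (ℓ - ℓ') t := by
    simpa [Pi.le_def, sub_pos] using hcon
  have hgap : ∀ t, 0 < (ℓ - ℓ') t → (N : ℝ)⁻¹ ≤ (ℓ - ℓ') t := fun t ht => by
    rw [Pi.sub_apply, hfix t, hfix' t] at ht ⊢
    exact le_sub_of_mul_natCast_lt (by positivity) (sub_pos.mp ht)
  have hnonneg : ∀ t, 0 < (ℓ - ℓ') t → 0 ≤ t := fun t ht => by
    by_contra! hneg
    simp [hfix.eq_zero_of_neg hneg, hfix'.eq_zero_of_neg hneg] at ht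
  have hN : (0 : ℝ) < (N : ℝ)⁻¹ := by
    rcases Nat.eq_zero_or_pos N with rfl | hN
    · simp [hfix t₀, hfix' t₀] at ht₀
    · positivity
  obtain ⟨hT, hfirst⟩ := isLeast_sInf_pos hN hgap (fun t => (hrc t).sub (hrc' t)) ⟨t₀, ht₀⟩
    ⟨0, hnonneg⟩
  refine (le_of_le_before hfix hfix' hα hf (hnonneg _ hT) (hphys _ (hnonneg _ hT))
    fun s hs => ?_).not_gt (sub_pos.mp hT)
  by_contra! h
  exact hs.not_ge (hfirst (sub_pos.mpr h))

end ParticleSystem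

open ParticleSystem

theorem isLossFixedPoint_of_eq_GammaN {Ω : Type*} {α : ℝ} {N : ℕ} {X0 : Fin N → Ω → ℝ}
    {B : Fin N → ℝ → Ω → ℝ} {L : ℝ → Ω → ℝ} {ω : Ω}
    (hfix : ∀ t, L t ω = GammaN α N X0 B L t ω) :
    IsLossFixedPoint α (fun i s => X0 i ω + B i s ω) (fun s => L s ω) := by
  refine fun t => (hfix t).trans ?_
  by_cases ht : 0 ≤ t
  · simp only [GammaN, if_pos ht, Finset.sum_boole]
    rfl
  · rw [hitBy_eq_empty_of_neg (not_le.mp ht)]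
    simp [GammaN, ht]

theorem ae_continuous_paths {Ω : Type*} [MeasurableSpace Ω] {P : Measure Ω} {N : ℕ}
    {B : Fin N → ℝ → Ω → ℝ} (hBM : ∀ i, IsBrownianMotion P (B i)) (X0 : Fin N → Ω → ℝ) :
    ∀ᵐ ω ∂P, ∀ i, Continuous fun s => X0 i ω + B i s ω :=
  ae_all_iff.mpr fun i => (hBM i).2.1.mono fun _ h => continuous_const.add h.2

theorem physical_eq_minimal_particle_general {Ω : Type} [MeasurableSpace Ω] (P : Measure Ω)
    (α : ℝ) (hα : 0 < α) (N : ℕ)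
    (X0 : Fin N → Ω → ℝ) (B : Fin N → ℝ → Ω → ℝ)
    (hBM : ∀ i, IsBrownianMotion P (B i)) :
    (∀ L : ℝ → Ω → ℝ, IsPhysicalParticleSolution P α N X0 B L →
      IsMinimalParticleSolution P α N X0 B L) ∧
    ∀ L L' : ℝ → Ω → ℝ, IsPhysicalParticleSolution P α N X0 B L →
      IsPhysicalParticleSolution P α N X0 B L' → ∀ᵐ ω ∂P, ∀ t, L t ω = L' t ω := by
  have minimal : ∀ L : ℝ → Ω → ℝ, IsPhysicalParticleSolution P α N X0 B L →
      IsMinimalParticleSolution P α N X0 B L := by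
    refine fun L hL => ⟨hL.1, fun L' hL' => ?_⟩
    filter_upwards [hL.1, hL.2, hL', ae_continuous_paths hBM X0] with ω hsol hphys hsol' hcont
    exact le_of_physicalJump (isLossFixedPoint_of_eq_GammaN hsol.2)
      (isLossFixedPoint_of_eq_GammaN hsol'.2) hα.le hcont hsol.1.2.1 hsol'.1.2.1 hphys
  refine ⟨minimal, fun L L' hL hL' => ?_⟩
  filter_upwards [(minimal L hL).2 L' hL'.1, (minimal L' hL').2 L hL.1] with ω h h' t
  exact (h t).antisymm (h' t)

/-- For every `N`, the physical solution to the `N`-particle system is equal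
to the minimal solution; in particular, the physical solution is pathwise unique. -/
theorem physical_eq_minimal_particle {Ω : Type} [MeasurableSpace Ω] (P : Measure Ω)
    [IsProbabilityMeasure P] (α : ℝ) (hα : 0 < α) (N : ℕ) (hN : 1 ≤ N)
    (X0 : Fin N → Ω → ℝ) (B : Fin N → ℝ → Ω → ℝ)
    (hmeas : ∀ i, Measurable (X0 i))
    (hsupp : ∀ᵐ ω ∂P, ∀ i, 0 ≤ X0 i ω)
    (hBM : ∀ i, IsBrownianMotion P (B i))
    (hiid : iIndepFun
      (fun i : Fin N => fun ω => (X0 i ω, fun t : ℝ => B i t ω)) P)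
    (hident : ∀ i j, Measure.map (X0 i) P = Measure.map (X0 j) P)
    (hXB : ∀ i, IndepFun (X0 i) (fun ω => fun t : ℝ => B i t ω) P) :
    (∀ L : ℝ → Ω → ℝ, IsPhysicalParticleSolution P α N X0 B L →
      IsMinimalParticleSolution P α N X0 B L) ∧
    ∀ L L' : ℝ → Ω → ℝ, IsPhysicalParticleSolution P α N X0 B L →
      IsPhysicalParticleSolution P α N X0 B L' → ∀ᵐ ω ∂P, ∀ t, L t ω = L' t ω :=
  physical_eq_minimal_particle_general P α hα N X0 B hBM

end
end
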